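/- Suppose a class F ⊆ [0,1]^X contains d thresholds with margin α and tightness β (with α > 2β > 0). Then sfat_{α−2β}(F) ≥ ⌊log₂ d⌋. -/

import Mathlib

/-!
Order the `2 ^ m` threshold functions as the leaves of a complete binary tree and label each
inner node by the threshold point separating its left and right halves, as in binary search.
Along any sign path, the leaf `f_i` reached lies left of the point `x_j` at every node on the
path exactly when the path turns left there, i.e. `i ≤ j`; so `f_i (x_j)` is near `u` at the left
turns and near `u'` at the right turns, and the constant witness `(u + u') / 2` is cleared by
`(|u - u'| - 2β) / 2` on each side.
-/

/-- The node of a binary tree at depth `t` along the sign path `ε` is indexed by the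
prefix `(ε 0, …, ε (t-1))`. -/
def pathPrefix (ε : ℕ → Bool) (t : ℕ) : List Bool := List.ofFn (fun i : Fin t => ε i)

/-- The pair of trees `(x, s)` of depth `d` is `α`-shattered by `F`: for every sign
pattern `ε` there is `f ∈ F` achieving margin `α/2` with the prescribed sign at every
node along the path `ε`. -/
def Shatters {Z : Type*} (F : Set (Z → ℝ)) (α : ℝ) (d : ℕ)
    (x : List Bool → Z) (s : List Bool → ℝ) : Prop :=
  ∀ ε : ℕ → Bool, ∃ f ∈ F, ∀ t < d,
    (if ε t then f (x (pathPrefix ε t)) - s (pathPrefix ε t)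
      else s (pathPrefix ε t) - f (x (pathPrefix ε t))) ≥ α / 2

/-- `F` `α`-shatters some pair of trees of depth `d`. -/
def IsShattered {Z : Type*} (F : Set (Z → ℝ)) (α : ℝ) (d : ℕ) : Prop :=
  ∃ x s, Shatters F α d x s

/-- The sequential fat-shattering dimension of `F` at scale `α`: the largest depth `d`
(possibly `⊤`) such that some pair of trees of depth `d` is `α`-shattered by `F`. -/
noncomputable def sfat {Z : Type*} (F : Set (Z → ℝ)) (α : ℝ) : ℕ∞ :=
  sSup {n : ℕ∞ | ∃ d : ℕ, n = (d : ℕ∞) ∧ IsShattered F α d}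

/-- `F` contains `m` thresholds with margin `γ` and tightness `β`: there are points
`x_1,…,x_m`, hypotheses `f_1,…,f_m ∈ F` and values `u, u' ∈ [0,1]` with `|u − u'| ≥ γ`,
such that `|f_i(x_j) − u| ≤ β` for `i ≤ j` and `|f_i(x_j) − u'| ≤ β` for `i > j`. -/
def HasThresholds {X : Type*} (F : Set (X → ℝ)) (m : ℕ) (γ β : ℝ) : Prop :=
  ∃ (x : Fin m → X) (f : Fin m → X → ℝ) (u u' : ℝ),
    (∀ i, f i ∈ F) ∧ u ∈ Set.Icc (0:ℝ) 1 ∧ u' ∈ Set.Icc (0:ℝ) 1 ∧ γ ≤ |u - u'| ∧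
    (∀ i j : Fin m, i ≤ j → |f i (x j) - u| ≤ β) ∧
    (∀ i j : Fin m, j < i → |f i (x j) - u'| ≤ β)

theorem pathPrefix_add (ε : ℕ → Bool) (t n : ℕ) :
    pathPrefix ε (t + n) = pathPrefix ε t ++ List.ofFn (fun i : Fin n => ε (t + i)) := by
  simp [pathPrefix, List.ofFn_add]

/-- In the complete binary tree with leaves `0, …, 2 ^ m - 1`, where `true` means "go left",
the leaves below node `p` are `leafOffset m p + k` for `k < 2 ^ (m - p.length)`. -/
def leafOffset : ℕ → List Bool → ℕ
  | _, [] => 0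
  | m, b :: p => (if b then 0 else 2 ^ (m - 1)) + leafOffset (m - 1) p

theorem leafOffset_append (m : ℕ) (p q : List Bool) :
    leafOffset m (p ++ q) = leafOffset m p + leafOffset (m - p.length) q := by
  induction p generalizing m with
  | nil => simp [leafOffset]
  | cons b p ih => simp [leafOffset, ih, Nat.sub_add_eq, Nat.sub_right_comm, add_assoc]

theorem leafOffset_add_two_pow_le {m : ℕ} {p : List Bool} (hp : p.length ≤ m) :
    leafOffset m p + 2 ^ (m - p.length) ≤ 2 ^ m := by
  induction p generalizing m with
  | nil => simp [leafOffset]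
  | cons b p ih =>
    obtain ⟨n, rfl⟩ : ∃ n, m = n + 1 := ⟨m - 1, by simp at hp; omega⟩
    have := ih (m := n) (by simpa using hp)
    simp only [leafOffset, List.length_cons, Nat.add_sub_add_right, Nat.add_sub_cancel, pow_succ]
    split <;> omega

def searchLeaf (m : ℕ) (ε : ℕ → Bool) : ℕ := leafOffset m (pathPrefix ε m)

/-- The last leaf of the left half below node `p`: the pivot of binary search at `p`. -/
def searchPivot (m : ℕ) (p : List Bool) : ℕ := leafOffset m p + 2 ^ (m - 1 - p.length) - 1

theorem searchLeaf_lt (m : ℕ) (ε : ℕ → Bool) : searchLeaf m ε < 2 ^ m := by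
  simpa [searchLeaf, pathPrefix] using
    leafOffset_add_two_pow_le (m := m) (p := pathPrefix ε m) (by simp [pathPrefix])

theorem searchPivot_add_one_lt {m : ℕ} {p : List Bool} (hp : p.length < m) :
    searchPivot m p + 1 < 2 ^ m := by
  have hblock := leafOffset_add_two_pow_le hp.le
  have hhalf : 2 ^ (m - 1 - p.length) * 2 = 2 ^ (m - p.length) := by
    rw [← pow_succ]; congr 1; omega
  have hpos := Nat.one_le_two_pow (n := m - 1 - p.length)
  unfold searchPivot
  omega

theorem searchLeaf_le_searchPivot_iff {m t : ℕ} (ε : ℕ → Bool) (ht : t < m) :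
    searchLeaf m ε ≤ searchPivot m (pathPrefix ε t) ↔ ε t = true := by
  obtain ⟨n, rfl⟩ : ∃ n, m = t + (n + 1) := ⟨m - t - 1, by omega⟩
  have hlen : (pathPrefix ε t).length = t := by simp [pathPrefix]
  have hrest := leafOffset_add_two_pow_le (m := n) (p := List.ofFn fun i : Fin n => ε (t + (i + 1)))
    (by simp)
  simp only [List.length_ofFn, Nat.sub_self, pow_zero] at hrest
  have hn : t + (n + 1) - t - 1 = n := by omega
  simp only [searchLeaf, searchPivot, pathPrefix_add, leafOffset_append, List.ofFn_succ,
    leafOffset, hlen, hn, Fin.val_zero, add_zero, Fin.val_succ]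
  -- the leaf is the offset at depth `t`, plus `2 ^ n` if `ε t = false`, plus less than `2 ^ n`
  have hpos := Nat.one_le_two_pow (n := n)
  cases ε t <;> simp <;> omega

section Shattering

variable {X : Type*} {F : Set (X → ℝ)} {m : ℕ} {x : ℕ → X} {f : ℕ → X → ℝ} {s γ : ℝ}

theorem isShattered_of_separated_thresholds (hf : ∀ i < 2 ^ m, f i ∈ F)
    (hle : ∀ i j, i ≤ j → j + 1 < 2 ^ m → s + γ / 2 ≤ f i (x j))
    (hlt : ∀ i j, j < i → i < 2 ^ m → f i (x j) ≤ s - γ / 2) :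
    IsShattered F γ m := by
  refine ⟨fun p => x (searchPivot m p), fun _ => s, fun ε =>
    ⟨f (searchLeaf m ε), hf _ (searchLeaf_lt m ε), fun t ht => ?_⟩⟩
  have hpivot : searchPivot m (pathPrefix ε t) + 1 < 2 ^ m :=
    searchPivot_add_one_lt (by simpa [pathPrefix] using ht)
  have hturn := searchLeaf_le_searchPivot_iff ε ht
  cases hε : ε t
  · have := hlt _ _ (not_le.1 (by simpa [hε] using hturn)) (searchLeaf_lt m ε)
    simp only [Bool.false_eq_true, if_false]
    linarith
  · have := hle _ _ (by simpa [hε] using hturn) hpivot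
    simp only [if_true]
    linarith

theorem isShattered_of_separated_thresholds_rev (hf : ∀ i < 2 ^ m, f i ∈ F)
    (hle : ∀ i j, i ≤ j → j + 1 < 2 ^ m → f i (x j) ≤ s - γ / 2)
    (hlt : ∀ i j, j < i → i < 2 ^ m → s + γ / 2 ≤ f i (x j)) :
    IsShattered F γ m :=
  -- point `j` separates functions `j` and `j + 1`, so reversal sends it to `2 ^ m - 2 - j`
  isShattered_of_separated_thresholds (x := fun j => x (2 ^ m - 2 - j))
    (f := fun i => f (2 ^ m - 1 - i)) (fun i _ => hf _ (by omega))
    (fun i j hij hj => hlt _ _ (by omega) (by omega))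
    (fun i j hji hi => hle _ _ (by omega) (by omega))

end Shattering

open Fin.NatCast in
theorem HasThresholds.isShattered {X : Type*} {F : Set (X → ℝ)} {d m : ℕ} {α β : ℝ}
    (h : HasThresholds F d α β) (hm : 2 ^ m ≤ d) : IsShattered F (α - 2 * β) m := by
  obtain ⟨n, rfl⟩ : ∃ n, d = n + 1 := ⟨d - 1, by have := Nat.one_le_two_pow (n := m); omega⟩
  obtain ⟨x, f, u, u', hf, -, -, hgap, hle, hlt⟩ := h
  have hle' : ∀ i j : ℕ, i ≤ j → j + 1 < 2 ^ m →
      |f (i : Fin (n + 1)) (x (j : Fin (n + 1))) - u| ≤ β := fun i j hij _ =>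
    hle _ _ ((Fin.natCast_le_natCast (by omega) (by omega)).2 hij)
  have hlt' : ∀ i j : ℕ, j < i → i < 2 ^ m →
      |f (i : Fin (n + 1)) (x (j : Fin (n + 1))) - u'| ≤ β := fun i j hji _ =>
    hlt _ _ ((Fin.natCast_lt_natCast (by omega) (by omega)).2 hji)
  rcases le_total u' u with hu | hu
  · rw [abs_of_nonneg (sub_nonneg.2 hu)] at hgap
    refine isShattered_of_separated_thresholds (x := fun j : ℕ => x j) (f := fun i : ℕ => f i)
      (s := (u + u') / 2) (fun i _ => hf _) (fun i j hij hj => ?_) (fun i j hji hi => ?_)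
    · linarith [(abs_le.1 (hle' i j hij hj)).1]
    · linarith [(abs_le.1 (hlt' i j hji hi)).2]
  · rw [abs_of_nonpos (sub_nonpos.2 hu)] at hgap
    refine isShattered_of_separated_thresholds_rev (x := fun j : ℕ => x j) (f := fun i : ℕ => f i)
      (s := (u + u') / 2) (fun i _ => hf _) (fun i j hij hj => ?_) (fun i j hji hi => ?_)
    · linarith [(abs_le.1 (hle' i j hij hj)).2]
    · linarith [(abs_le.1 (hlt' i j hji hi)).1]

theorem stmt5 {X : Type*} (F : Set (X → ℝ))
    (d : ℕ) (α β : ℝ)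
    (h : HasThresholds F d α β) :
    (Nat.log 2 d : ℕ∞) ≤ sfat F (α - 2 * β) := by
  rcases Nat.eq_zero_or_pos d with rfl | hd
  · simp
  exact le_sSup ⟨_, rfl, h.isShattered (Nat.pow_log_le_self 2 hd.ne')⟩
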